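/- Let m ≥ 1 and let η_1, …, η_m : ℤ → ℝ be sequences such that for every j with 1 ≤ j ≤ m the Δ-Wronskian W_j^Δ(η_1,…,η_j)(n) is nonzero for all n ∈ ℤ. Define T_0 = id and, inductively for 1 ≤ j ≤ m, φ_j := T_{j−1}(η_j) and T_j := T_d(φ_j)∘T_{j−1}. Then each φ_j is nowhere vanishing (so T_j is defined) and, for every sequence g : ℤ → ℝ and all n ∈ ℤ, (T_m g)(n) = W_{m+1}^Δ(η_1,…,η_m,g)(n) / W_m^Δ(η_1,…,η_m)(n). (Determinant representation of the m-step gauge transformation operator T_m.) -/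
import Mathlib


/-- Difference operator: `(Δ f) n = f (n+1) - f n`. -/
def deltaOp (f : ℤ → ℝ) : ℤ → ℝ := fun n => f (n + 1) - f n

/-- Difference-type gauge transformation operator `T_d(q) = Λ(q)∘Δ∘q⁻¹`:
`(T_d(q)f)(n) = q(n+1)·(Δ(f/q))(n)`. -/
noncomputable def Td (q f : ℤ → ℝ) : ℤ → ℝ := fun n => q (n + 1) * deltaOp (fun m => f m / q m) n

/-- Δ-Wronskian `W_k^Δ(f_1,…,f_k)(n) = det[(Δ^{i−1} f_j)(n)]_{1≤i,j≤k}`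
(here `i j : Fin k` are 0-based, so rows are `Δ^i` and columns the functions). -/
noncomputable def Wr {k : ℕ} (η : Fin k → ℤ → ℝ) (n : ℤ) : ℝ :=
  (Matrix.of fun i j : Fin k => (deltaOp^[(i : ℕ)] (η j)) n).det

/-- Iterated gauge transformation: `T_0 = id` and `T_{j+1} = T_d(T_j(η_{j+1}))∘T_j`,
where `η 0, η 1, …` are the generating sequences `η_1, η_2, …` (0-based indexing). -/
noncomputable def Titer (η : ℕ → ℤ → ℝ) : ℕ → (ℤ → ℝ) → (ℤ → ℝ)
  | 0 => id
  | j + 1 => Td (Titer η j (η j)) ∘ Titer η j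

lemma deltaOp_eq_fwdDiff : deltaOp = fwdDiff (1 : ℤ) := rfl

lemma delta_iter (f : ℤ → ℝ) (i : ℕ) (n : ℤ) :
    deltaOp^[i] f n = ∑ j ∈ Finset.range (i+1), ((-1:ℝ)^(i-j) * (i.choose j)) * f (n + j) := by
  rw [deltaOp_eq_fwdDiff, fwdDiff_iter_eq_sum_shift]
  congr 1 with j
  ring_nf
  simp [zsmul_eq_mul]

noncomputable def casMat {k : ℕ} (η : Fin k → ℤ → ℝ) (n : ℤ) : Matrix (Fin k) (Fin k) ℝ :=
  Matrix.of fun i j : Fin k => η j (n + (i : ℕ))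

noncomputable def pasMat (k : ℕ) : Matrix (Fin k) (Fin k) ℝ :=
  Matrix.of fun i j : Fin k =>
    if (j:ℕ) ≤ (i:ℕ) then (-1:ℝ)^((i:ℕ)-(j:ℕ)) * ((i:ℕ).choose (j:ℕ)) else 0

lemma wr_eq_cas {k : ℕ} (η : Fin k → ℤ → ℝ) (n : ℤ) : Wr η n = (casMat η n).det := by
  have hmat : (Matrix.of fun i j : Fin k => (deltaOp^[(i : ℕ)] (η j)) n)
      = pasMat k * casMat η n := by
    ext i l
    simp only [Matrix.of_apply, Matrix.mul_apply, pasMat, casMat, Matrix.of_apply]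
    rw [delta_iter]
    rw [Fin.sum_univ_eq_sum_range
      (fun j => (if j ≤ (i:ℕ) then (-1:ℝ)^((i:ℕ)-j) * ((i:ℕ).choose j) else 0) * η l (n + j))]
    rw [← Finset.sum_subset (Finset.range_subset_range.mpr (Nat.succ_le_of_lt i.isLt))]
    · apply Finset.sum_congr rfl
      intro j hj
      rw [if_pos (Nat.lt_succ_iff.mp (Finset.mem_range.mp hj))]
    · intro j _ hj
      rw [if_neg (by simpa using Finset.mem_range.not.mp hj), zero_mul]
  have hP : (pasMat k).det = 1 := by
    rw [Matrix.det_of_lowerTriangular (pasMat k)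
      (by intro i j hij
          simp only [pasMat, Matrix.of_apply]
          rw [if_neg (Nat.not_le.mpr (show (i:ℕ) < (j:ℕ) from hij))])]
    · simp [pasMat]
  rw [Wr, hmat, Matrix.det_mul, hP, one_mul]

noncomputable def colA {k : ℕ} (ηv : Fin (k+1) → ℤ → ℝ) (n : ℤ) : Fin (k+2) → Fin (k+2) → ℝ :=
  Fin.snoc (fun j i => ηv j (n + (i : ℕ))) (fun i => if i = Fin.last (k+1) then 1 else 0)

noncomputable def Amat {k : ℕ} (ηv : Fin (k+1) → ℤ → ℝ) (n : ℤ) : Matrix (Fin (k+2)) (Fin (k+2)) ℝ :=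
  Matrix.of fun i j => colA ηv n j i

lemma Amat_det {k : ℕ} (ηv : Fin (k+1) → ℤ → ℝ) (n : ℤ) : (Amat ηv n).det = Wr ηv n := by
  rw [wr_eq_cas, Matrix.det_succ_column (Amat ηv n) (Fin.last (k+1))]
  rw [Finset.sum_eq_single (Fin.last (k+1))]
  · have h1 : Amat ηv n (Fin.last (k+1)) (Fin.last (k+1)) = 1 := by
      simp [Amat, colA, Fin.snoc_last]
    have hsign : (-1 : ℝ) ^ ((Fin.last (k+1) : ℕ) + (Fin.last (k+1) : ℕ)) = 1 := by
      rw [Fin.val_last, ← two_mul (k+1), pow_mul]; norm_num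
    have hsub : ((Amat ηv n).submatrix (Fin.last (k+1)).succAbove
        (Fin.last (k+1)).succAbove).det = (casMat ηv n).det := by
      congr 1
      ext i j
      simp only [Matrix.submatrix_apply, Fin.succAbove_last, Amat, Matrix.of_apply, colA,
        casMat]
      rw [Fin.snoc_castSucc]
      simp [Fin.coe_castSucc]
    rw [h1, hsign, hsub]
    ring
  · intro i _ hi
    have h0 : Amat ηv n i (Fin.last (k+1)) = 0 := by
      simp only [Amat, Matrix.of_apply, colA]
      rw [Fin.snoc_last]
      exact if_neg hi
    rw [h0]; ring
  · intro h; exact absurd (Finset.mem_univ _) h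

lemma key {k : ℕ} (ηv : Fin (k+1) → ℤ → ℝ) (n : ℤ) (hW : Wr ηv n ≠ 0)
    (b : Fin (k+2) → ℝ) (hlast : b (Fin.last (k+1)) = 1)
    (hkill : ∀ j : Fin (k+1), ∑ i : Fin (k+2), b i * ηv j (n + (i : ℕ)) = 0)
    (g : ℤ → ℝ) :
    (∑ i : Fin (k+2), b i * g (n + (i : ℕ))) * Wr ηv n = Wr (Fin.snoc ηv g) n := by
  classical
  set A := Amat ηv n with hA
  -- linear maps
  set Llm : (Fin (k+2) → ℝ) →ₗ[ℝ] ℝ :=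
    { toFun := fun w => ∑ i : Fin (k+2), b i * w i
      map_add' := by intro x y; simp [mul_add, Finset.sum_add_distrib]
      map_smul' := by intro c x; simp [Finset.mul_sum]; congr 1; ext i; ring } with hL
  set Rlm : (Fin (k+2) → ℝ) →ₗ[ℝ] ℝ :=
    { toFun := fun w => (A.updateCol (Fin.last (k+1)) w).det
      map_add' := by intro x y; exact Matrix.det_updateCol_add A _ x y
      map_smul' := by intro c x; exact Matrix.det_updateCol_smul A _ c x } with hR
  set Dlm : (Fin (k+2) → ℝ) →ₗ[ℝ] ℝ := Wr ηv n • Llm - Rlm with hD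
  have hcolzero : ∀ j : Fin (k+2), Dlm (colA ηv n j) = 0 := by
    intro j
    refine Fin.lastCases ?_ ?_ j
    · -- j = last
      have hcol : colA ηv n (Fin.last (k+1)) = fun i => A i (Fin.last (k+1)) := rfl
      have hLval : Llm (colA ηv n (Fin.last (k+1))) = 1 := by
        simp only [hL, LinearMap.coe_mk, AddHom.coe_mk, colA, Fin.snoc_last]
        rw [Finset.sum_eq_single (Fin.last (k+1))]
        · simp [hlast]
        · intro i _ hi; rw [if_neg hi]; ring
        · intro h; exact absurd (Finset.mem_univ _) h
      have hRval : Rlm (colA ηv n (Fin.last (k+1))) = Wr ηv n := by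
        simp only [hR, LinearMap.coe_mk, AddHom.coe_mk]
        rw [hcol, Matrix.updateCol_eq_self, Amat_det]
      simp [hD, hLval, hRval]
    · -- j = castSucc j'
      intro j'
      have hLval : Llm (colA ηv n (Fin.castSucc j')) = 0 := by
        simp only [hL, LinearMap.coe_mk, AddHom.coe_mk, colA, Fin.snoc_castSucc]
        exact hkill j'
      have hRval : Rlm (colA ηv n (Fin.castSucc j')) = 0 := by
        simp only [hR, LinearMap.coe_mk, AddHom.coe_mk]
        apply Matrix.det_zero_of_column_eq (ne_of_lt (Fin.castSucc_lt_last j'))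
        intro i
        rw [Matrix.updateCol_ne (ne_of_lt (Fin.castSucc_lt_last j')),
          Matrix.updateCol_self]
        rfl
      simp [hD, hLval, hRval]
  have hDzero : ∀ w : Fin (k+2) → ℝ, Dlm w = 0 := by
    intro w
    have hunit : IsUnit A.det := by rw [hA, Amat_det]; exact hW.isUnit
    set c := A⁻¹.mulVec w with hc
    have hw : w = ∑ j : Fin (k+2), c j • colA ηv n j := by
      have h1 : A.mulVec c = w := by
        rw [hc, Matrix.mulVec_mulVec, Matrix.mul_nonsing_inv A hunit, Matrix.one_mulVec]
      rw [← h1]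
      funext i
      simp only [Matrix.mulVec, dotProduct, Finset.sum_apply, Pi.smul_apply,
        smul_eq_mul]
      apply Finset.sum_congr rfl
      intro j _
      show A i j * c j = c j * colA ηv n j i
      rw [mul_comm]
      rfl
    rw [hw, map_sum]
    apply Finset.sum_eq_zero
    intro j _
    rw [map_smul, hcolzero j, smul_zero]
  have hgw := hDzero (fun i => g (n + (i : ℕ)))
  have hRg : Rlm (fun i : Fin (k+2) => g (n + (i : ℕ))) = Wr (Fin.snoc ηv g) n := by
    simp only [hR, LinearMap.coe_mk, AddHom.coe_mk]
    rw [wr_eq_cas]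
    congr 1
    ext i j
    refine Fin.lastCases ?_ ?_ j
    · rw [Matrix.updateCol_self]
      simp [casMat, Fin.snoc_last]
    · intro j'
      rw [Matrix.updateCol_ne (ne_of_lt (Fin.castSucc_lt_last j'))]
      simp only [hA, Amat, Matrix.of_apply, colA, Fin.snoc_castSucc, casMat]
  simp only [hD, LinearMap.sub_apply, LinearMap.smul_apply, smul_eq_mul, sub_eq_zero] at hgw
  rw [hRg] at hgw
  rw [← hgw]
  simp only [hL, LinearMap.coe_mk, AddHom.coe_mk]
  ring

lemma Td_apply (q f : ℤ → ℝ) (n : ℤ) (hq : q n ≠ 0) (hq1 : q (n+1) ≠ 0) :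
    Td q f n = f (n+1) - (q (n+1) / q n) * f n := by
  simp only [Td, deltaOp]
  field_simp

lemma Td_self (q : ℤ → ℝ) (n : ℤ) (hq : q n ≠ 0) (hq1 : q (n+1) ≠ 0) : Td q q n = 0 := by
  rw [Td_apply q q n hq hq1, div_mul_cancel₀ _ hq]
  ring

lemma Td_zero (q f : ℤ → ℝ) (n : ℤ) (h1 : f (n+1) = 0) (h0 : f n = 0) : Td q f n = 0 := by
  simp [Td, deltaOp, h1, h0]

lemma snoc_eta (η : ℕ → ℤ → ℝ) (k : ℕ) :
    Fin.snoc (fun i : Fin k => η (i : ℕ)) (η k) = fun i : Fin (k+1) => η (i : ℕ) := by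
  funext i
  refine Fin.lastCases ?_ ?_ i
  · rw [Fin.snoc_last]; simp
  · intro j; rw [Fin.snoc_castSucc]; simp

lemma wr_zero (η : Fin 0 → ℤ → ℝ) (n : ℤ) : Wr η n = 1 := Matrix.det_fin_zero

lemma main_ind (m : ℕ) (η : ℕ → ℤ → ℝ)
    (hW : ∀ j : ℕ, 1 ≤ j → j ≤ m → ∀ n : ℤ, Wr (fun i : Fin j => η i) n ≠ 0) :
    ∀ k, k ≤ m →
      ((∀ j, j < k → ∀ n, Titer η k (η j) n = 0) ∧
       (∀ n, ∃ a : Fin (k+1) → ℝ, a (Fin.last k) = 1 ∧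
          ∀ g, Titer η k g n = ∑ i : Fin (k+1), a i * g (n + (i : ℕ))) ∧
       (∀ g n, Titer η k g n =
          Wr (Fin.snoc (fun i : Fin k => η i) g) n / Wr (fun i : Fin k => η i) n)) := by
  intro k
  induction k with
  | zero =>
    intro _
    refine ⟨fun j hj => absurd hj (Nat.not_lt_zero j), fun n => ⟨fun _ => 1, rfl, ?_⟩, ?_⟩
    · intro g
      simp [Titer]
    · intro g n
      rw [wr_zero, div_one, Wr, Matrix.det_fin_one, Matrix.of_apply]
      have h0 : (0 : Fin 1) = Fin.last 0 := rfl
      rw [h0, Fin.snoc_last]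
      simp [Titer]
  | succ k IH =>
    intro hk1
    obtain ⟨hkill, hwin, hdet⟩ := IH (Nat.le_of_succ_le hk1)
    set φ := Titer η k (η k) with hφdef
    have hWk : ∀ n, Wr (fun i : Fin k => η i) n ≠ 0 := by
      intro n
      rcases Nat.eq_zero_or_pos k with h | h
      · subst h; rw [wr_zero]; norm_num
      · exact hW k h (Nat.le_of_succ_le hk1) n
    have hWk1 : ∀ n, Wr (fun i : Fin (k+1) => η i) n ≠ 0 := fun n =>
      hW (k+1) (Nat.succ_le_succ (Nat.zero_le k)) hk1 n
    have hφ : ∀ n, φ n ≠ 0 := by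
      intro n
      rw [hφdef, hdet (η k) n, snoc_eta]
      exact div_ne_zero (hWk1 n) (hWk n)
    have hstep : ∀ g n, Titer η (k+1) g n
        = Titer η k g (n+1) - (φ (n+1) / φ n) * Titer η k g n := by
      intro g n
      show Td φ (Titer η k g) n = _
      rw [Td_apply φ (Titer η k g) n (hφ n) (hφ (n+1))]
    -- new window
    have hwin' : ∀ n, ∃ b : Fin (k+2) → ℝ, b (Fin.last (k+1)) = 1 ∧
        ∀ g, Titer η (k+1) g n = ∑ i : Fin (k+2), b i * g (n + (i : ℕ)) := by
      intro n
      obtain ⟨a, halast, ha⟩ := hwin n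
      obtain ⟨a', halast', ha'⟩ := hwin (n+1)
      set c := φ (n+1) / φ n with hc
      refine ⟨fun i => (Fin.cons (0:ℝ) a' : Fin (k+2) → ℝ) i - c * (Fin.snoc a (0:ℝ) : Fin (k+2) → ℝ) i, ?_, ?_⟩
      · have h1 : Fin.last (k+1) = (Fin.last k).succ := by
          rw [← Fin.succ_last]
        rw [h1]
        beta_reduce
        rw [Fin.cons_succ, ← h1, Fin.snoc_last, halast']
        ring
      · intro g
        rw [hstep g n, ha g, ha' g]
        simp only [sub_mul, mul_assoc, Finset.sum_sub_distrib, ← Finset.mul_sum]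
        congr 1
        · conv_rhs => rw [Fin.sum_univ_succ]
          simp only [Fin.cons_zero, Fin.cons_succ, zero_mul, zero_add]
          apply Finset.sum_congr rfl
          intro i _
          congr 2
          rw [Fin.val_succ]; push_cast; ring
        · congr 1
          conv_rhs => rw [Fin.sum_univ_castSucc]
          simp only [Fin.snoc_castSucc, Fin.snoc_last, zero_mul, add_zero]
          apply Finset.sum_congr rfl
          intro i _
          rw [Fin.coe_castSucc]
    -- new kill
    have hkill' : ∀ j, j < k + 1 → ∀ n, Titer η (k+1) (η j) n = 0 := by
      intro j hj n
      rcases Nat.lt_succ_iff_lt_or_eq.mp hj with h | h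
      · exact Td_zero φ (Titer η k (η j)) n (hkill j h (n+1)) (hkill j h n)
      · subst h
        exact Td_self φ n (hφ n) (hφ (n+1))
    refine ⟨hkill', hwin', ?_⟩
    intro g n
    obtain ⟨b, hblast, hb⟩ := hwin' n
    have hkillvec : ∀ j : Fin (k+1), ∑ i : Fin (k+2), b i * η (j : ℕ) (n + (i : ℕ)) = 0 := by
      intro j
      rw [← hb (η (j : ℕ))]
      exact hkill' (j : ℕ) j.isLt n
    have hkey := key (fun i : Fin (k+1) => η (i : ℕ)) n (hWk1 n) b hblast hkillvec g
    rw [← hb g] at hkey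
    rw [eq_div_iff (hWk1 n)]
    exact hkey

/-- Determinant representation of the `m`-step gauge transformation: if all the
Δ-Wronskians `W_j^Δ(η_1,…,η_j)` (`1 ≤ j ≤ m`) are nowhere vanishing, then each
`φ_j = T_{j−1}(η_j)` is nowhere vanishing, and
`(T_m g)(n) = W_{m+1}^Δ(η_1,…,η_m,g)(n) / W_m^Δ(η_1,…,η_m)(n)` for every `g`. -/
theorem stmt9 (m : ℕ) (hm : 1 ≤ m) (η : ℕ → ℤ → ℝ)
    (hW : ∀ j : ℕ, 1 ≤ j → j ≤ m → ∀ n : ℤ, Wr (fun i : Fin j => η i) n ≠ 0) :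
    (∀ j : ℕ, 1 ≤ j → j ≤ m → ∀ n : ℤ, Titer η (j - 1) (η (j - 1)) n ≠ 0) ∧
    (∀ (g : ℤ → ℝ) (n : ℤ),
      Titer η m g n =
        Wr (Fin.snoc (fun i : Fin m => η i) g) n / Wr (fun i : Fin m => η i) n) := by
  have hmain := main_ind m η hW
  constructor
  · intro j hj1 hjm n
    obtain ⟨k, rfl⟩ : ∃ k, j = k + 1 := ⟨j - 1, (Nat.succ_pred_eq_of_pos hj1).symm⟩
    simp only [Nat.add_sub_cancel]
    obtain ⟨_, _, hdet⟩ := hmain k (Nat.le_of_succ_le hjm)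
    rw [hdet (η k) n, snoc_eta]
    apply div_ne_zero (hW (k+1) hj1 hjm n)
    rcases Nat.eq_zero_or_pos k with h | h
    · subst h; rw [wr_zero]; norm_num
    · exact hW k h (Nat.le_of_succ_le hjm) n
  · exact (hmain m le_rfl).2.2
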